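/- In the geometric realization of a connected simply connected Cartan graph 𝒞 with real root system, let b, b' ∈ A, x ∈ K^b, y ∈ K^{b'}, and let Γ(b,b') denote the set of minimal galleries from K^b to K^{b'}. Then the closed segment [x,y] is contained in the union of the closures cl(K^c) over all chambers K^c occurring in some minimal gallery in Γ(b,b'). Moreover, the set of chambers occurring in minimal galleries in Γ(b,b') is finite. -/

import Mathlib

open Set

noncomputable section

section Arrangements

variable {V : Type*} [AddCommGroup V] [Module ℝ V] [TopologicalSpace V]

/-- The kernel of a linear functional, as a subset of `V`. -/
def dualKer (α : Module.Dual ℝ V) : Set V := {v | α v = 0}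

/-- A linear hyperplane: the kernel of a nonzero linear functional. -/
def IsLinearHyperplane (H : Set V) : Prop :=
  ∃ α : Module.Dual ℝ V, α ≠ 0 ∧ H = dualKer α

/-- A hyperplane arrangement `(𝒜, T)`: `T` is an open convex cone, `𝒜` a set of linear
hyperplanes, each meeting `T`, which is locally finite in `T`. -/
structure IsHyperplaneArrangement (𝒜 : Set (Set V)) (T : Set V) : Prop where
  T_nonempty : T.Nonempty
  T_open : IsOpen T
  T_convex : Convex ℝ T
  T_cone : ∀ x ∈ T, ∀ c : ℝ, 0 < c → c • x ∈ T
  hyperplanes : ∀ H ∈ 𝒜, IsLinearHyperplane H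
  meets : ∀ H ∈ 𝒜, (H ∩ T).Nonempty
  locallyFinite : ∀ x ∈ T, ∃ U : Set V, IsOpen U ∧ x ∈ U ∧ U ⊆ T ∧
    {H ∈ 𝒜 | (H ∩ U).Nonempty}.Finite

/-- The chambers: connected components of `T \ ⋃ 𝒜`. -/
def chambersOf (𝒜 : Set (Set V)) (T : Set V) : Set (Set V) :=
  {K | ∃ x ∈ T \ ⋃₀ 𝒜, K = connectedComponentIn (T \ ⋃₀ 𝒜) x}

/-- `H` is a wall of the chamber `K`: a hyperplane missing `K` such that
`H ∩ cl(K)` spans `H`. -/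
def IsWall (K H : Set V) : Prop :=
  IsLinearHyperplane H ∧ H ∩ K = ∅ ∧
    (Submodule.span ℝ (H ∩ closure K) : Set V) = H

/-- An open simplicial cone: `⋂_{α ∈ B} α⁻¹(ℝ_{>0})` for a basis `B` of the dual space. -/
def IsOpenSimplicialCone (K : Set V) : Prop :=
  ∃ b : Module.Basis (Fin (Module.finrank ℝ V)) ℝ (Module.Dual ℝ V),
    K = {v | ∀ i, 0 < b i v}

/-- A Tits arrangement: a hyperplane arrangement all of whose chambers are open simplicial
cones (simplicial) and such that every wall of every chamber belongs to `𝒜` (thin). -/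
structure IsTitsArrangement (𝒜 : Set (Set V)) (T : Set V) extends
    IsHyperplaneArrangement 𝒜 T : Prop where
  simplicial : ∀ K ∈ chambersOf 𝒜 T, IsOpenSimplicialCone K
  thin : ∀ K ∈ chambersOf 𝒜 T, ∀ H : Set V, IsWall K H → H ∈ 𝒜

/-- `R` is a root system with associated arrangement `𝒜`: `0 ∉ R`, `R = -R` and
`𝒜 = {ker α | α ∈ R}`. -/
def IsAssociatedRootSystem (𝒜 : Set (Set V)) (R : Set (Module.Dual ℝ V)) : Prop :=
  (0 : Module.Dual ℝ V) ∉ R ∧ (∀ α ∈ R, -α ∈ R) ∧ 𝒜 = {H | ∃ α ∈ R, H = dualKer α}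

/-- The root basis `B^K` of a chamber `K`. -/
def rootBasisOf (R : Set (Module.Dual ℝ V)) (K : Set V) : Set (Module.Dual ℝ V) :=
  {α ∈ R | IsWall K (dualKer α) ∧ ∀ x ∈ K, 0 < α x}

/-- `β` is a non-negative real linear combination of elements of `B`. -/
def InNNRealSpan (B : Set (Module.Dual ℝ V)) (β : Module.Dual ℝ V) : Prop :=
  ∃ (s : Finset (Module.Dual ℝ V)) (c : Module.Dual ℝ V → ℝ),
    ↑s ⊆ B ∧ (∀ α ∈ s, 0 ≤ c α) ∧ β = ∑ α ∈ s, c α • α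

/-- `β` is a non-negative integral linear combination of elements of `B`. -/
def InNatSpan (B : Set (Module.Dual ℝ V)) (β : Module.Dual ℝ V) : Prop :=
  ∃ (s : Finset (Module.Dual ℝ V)) (c : Module.Dual ℝ V → ℕ),
    ↑s ⊆ B ∧ β = ∑ α ∈ s, (c α : ℝ) • α

/-- `β` is an integral linear combination of elements of `B`. -/
def InIntSpan (B : Set (Module.Dual ℝ V)) (β : Module.Dual ℝ V) : Prop :=
  ∃ (s : Finset (Module.Dual ℝ V)) (c : Module.Dual ℝ V → ℤ),
    ↑s ⊆ B ∧ β = ∑ α ∈ s, (c α : ℝ) • α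

/-- The crystallographic property: `R ⊆ ±∑_{α ∈ B^K} ℕ₀ α` for every chamber `K`. -/
def IsCrystallographic (𝒜 : Set (Set V)) (T : Set V) (R : Set (Module.Dual ℝ V)) : Prop :=
  ∀ K ∈ chambersOf 𝒜 T, ∀ β ∈ R,
    InNatSpan (rootBasisOf R K) β ∨ InNatSpan (rootBasisOf R K) (-β)

/-- The chamber complex `𝒮(𝒜,T)`. -/
def chamberComplexOf (𝒜 : Set (Set V)) (T : Set V) : Set (Set V) :=
  {S | ∃ K ∈ chambersOf 𝒜 T, ∃ W : Set (Set V),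
    (∀ H ∈ W, IsWall K H) ∧ S = closure K ∩ ⋂₀ W}

/-- `(𝒜,T)` is `k`-spherical: every simplex of the chamber complex of codimension `k`
meets `T`. -/
def IsKSpherical (𝒜 : Set (Set V)) (T : Set V) (k : ℕ) : Prop :=
  ∀ S ∈ chamberComplexOf 𝒜 T,
    Module.finrank ℝ (Submodule.span ℝ S) = Module.finrank ℝ V - k → (S ∩ T).Nonempty

/-- A reduced root system: `R ∩ ℝα = {±α}` for every `α ∈ R`. -/
def IsReducedRS (R : Set (Module.Dual ℝ V)) : Prop :=
  ∀ α ∈ R, {β ∈ R | ∃ c : ℝ, β = c • α} = {α, -α}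

/-- The hyperplane `H` separates `K` and `K'`. -/
def SeparatesH (H K K' : Set V) : Prop :=
  ∃ α : Module.Dual ℝ V, H = dualKer α ∧ (∀ x ∈ K, 0 < α x) ∧ ∀ x ∈ K', α x < 0

/-- The set `S(K,K')` of hyperplanes of `𝒜` separating `K` and `K'`. -/
def sepSet (𝒜 : Set (Set V)) (K K' : Set V) : Set (Set V) :=
  {H ∈ 𝒜 | SeparatesH H K K'}

/-- The reduction of a set of functionals: the shortest elements on each line. -/
def reducedOf (S : Set (Module.Dual ℝ V)) : Set (Module.Dual ℝ V) :=
  {β ∈ S | ∀ γ ∈ S, ∀ c : ℝ, γ = c • β → 1 ≤ |c|}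

end Arrangements

/-- The standard real vector space `ℝ^r`. -/
abbrev Vr (r : ℕ) : Type := Fin r → ℝ
section CartanGraphs

/-- A generalized Cartan matrix. -/
def IsGCM {I : Type*} (C : Matrix I I ℤ) : Prop :=
  (∀ i, C i i = 2) ∧ (∀ i j, i ≠ j → C i j ≤ 0) ∧
    ∀ i j, i ≠ j → C i j = 0 → C j i = 0

variable {I A : Type*} [Fintype I] [DecidableEq I]

/-- The reflection `σ_i` attached to a generalized Cartan matrix, acting on `ℤ^I`;
on the standard basis it is `σ_i(α_j) = α_j - c_{ij} α_i`. -/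
def gcmSigma (C : Matrix I I ℤ) (i : I) : (I → ℤ) → (I → ℤ) :=
  fun v k => v k - if k = i then ∑ j, C i j * v j else 0

/-- `WeylHom ρ C a b f` : `f` is a morphism from `a` to `b` of the Weyl groupoid of the
Cartan graph `(I, A, ρ, C)`, i.e. a composite of maps `σ_i^c ∈ Hom(c, ρ_i(c))`. -/
inductive WeylHom (ρ : I → A → A) (C : A → Matrix I I ℤ) :
    A → A → ((I → ℤ) → (I → ℤ)) → Prop
  | id (a : A) : WeylHom ρ C a a _root_.id
  | comp {a b : A} {f : (I → ℤ) → (I → ℤ)} (i : I) :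
      WeylHom ρ C a b f → WeylHom ρ C a (ρ i b) (gcmSigma (C b) i ∘ f)

/-- The axioms of a Cartan graph: `A` nonempty, all `C^a` generalized Cartan matrices,
(C1) each `ρ_i` an involution, (C2) `c^a_{ij} = c^{ρ_i(a)}_{ij}`. -/
def IsCartanGraph (ρ : I → A → A) (C : A → Matrix I I ℤ) : Prop :=
  Nonempty A ∧ (∀ a, IsGCM (C a)) ∧ (∀ i, Function.Involutive (ρ i)) ∧
    ∀ a i j, C a i j = C (ρ i a) i j

/-- Connectedness: all Hom-sets of the Weyl groupoid are nonempty. -/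
def CGConnected (ρ : I → A → A) (C : A → Matrix I I ℤ) : Prop :=
  ∀ a b : A, ∃ f, WeylHom ρ C a b f

/-- Simple connectedness: `Hom(a,a) = {id}` for every object `a`. -/
def CGSimplyConnected (ρ : I → A → A) (C : A → Matrix I I ℤ) : Prop :=
  ∀ (a : A) (f : (I → ℤ) → (I → ℤ)), WeylHom ρ C a a f → f = _root_.id

/-- The set of real roots at `a`: all images of standard basis vectors under morphisms
into `a`. -/
def realRootsAt (ρ : I → A → A) (C : A → Matrix I I ℤ) (a : A) : Set (I → ℤ) :=
  {v | ∃ (b : A) (f : (I → ℤ) → (I → ℤ)) (j : I), WeylHom ρ C b a f ∧ v = f (Pi.single j 1)}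

/-- A root system of type `𝒞 = (I, A, ρ, C)`: axioms (R1)-(R4). -/
def IsRootSystemOfType (ρ : I → A → A) (C : A → Matrix I I ℤ)
    (R : A → Set (I → ℤ)) : Prop :=
  (∀ a, R a = {v ∈ R a | ∀ i, 0 ≤ v i} ∪ (fun v => -v) '' {v ∈ R a | ∀ i, 0 ≤ v i}) ∧
  (∀ (a : A) (i : I), {v ∈ R a | ∃ n : ℤ, v = n • Pi.single i 1} =
      {Pi.single i 1, -Pi.single i 1}) ∧
  (∀ (a : A) (i : I), gcmSigma (C a) i '' R a = R (ρ i a)) ∧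
  ∀ (a : A) (i j : I), i ≠ j →
    {v ∈ R a | ∃ m n : ℕ, v = (m : ℤ) • Pi.single i 1 + (n : ℤ) • Pi.single j 1}.Finite →
    (ρ i ∘ ρ j)^[{v ∈ R a |
        ∃ m n : ℕ, v = (m : ℤ) • Pi.single i 1 + (n : ℤ) • Pi.single j 1}.ncard] a = a

end CartanGraphs
section GeometricRealization

variable {r : ℕ} {A : Type*}

/-- The map `ψ : ℤ^r → V*` determined by a basis `(β_i)` of `V*`: `ψ(α_i) = β_i`. -/
def psiMap (bβ : Module.Basis (Fin r) ℝ (Module.Dual ℝ (Vr r))) (v : Fin r → ℤ) :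
    Module.Dual ℝ (Vr r) :=
  ∑ i, (v i : ℝ) • bβ i

/-- The open cone `K^b` attached to the (unique) morphism `u ∈ Hom(b,a)`:
`K^b = ⋂_i ψ_b(α_i)^+` where `ψ_b(α_i) = ψ(u(α_i))`. -/
def Kch (bβ : Module.Basis (Fin r) ℝ (Module.Dual ℝ (Vr r)))
    (u : (Fin r → ℤ) → (Fin r → ℤ)) : Set (Vr r) :=
  {x | ∀ i : Fin r, 0 < psiMap bβ (u (Pi.single i 1)) x}

/-- The root system `R = ψ((R^re)^a)` of the geometric realization. -/
def geoR (ρ : Fin r → A → A) (C : A → Matrix (Fin r) (Fin r) ℤ) (a : A)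
    (bβ : Module.Basis (Fin r) ℝ (Module.Dual ℝ (Vr r))) : Set (Module.Dual ℝ (Vr r)) :=
  psiMap bβ '' realRootsAt ρ C a

/-- The arrangement `𝒜 = {ker α | α ∈ R}` of the geometric realization. -/
def geoA (ρ : Fin r → A → A) (C : A → Matrix (Fin r) (Fin r) ℤ) (a : A)
    (bβ : Module.Basis (Fin r) ℝ (Module.Dual ℝ (Vr r))) : Set (Set (Vr r)) :=
  {H | ∃ α ∈ geoR ρ C a bβ, H = dualKer α}

/-- Adjacency of objects `b, c` of the Cartan graph: the corresponding chambers `K^b`, `K^c`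
are distinct and the span of `cl(K^b) ∩ cl(K^c)` is the wall `ker ψ_b(α_i)` for some `i`. -/
def objAdj (ρ : Fin r → A → A) (C : A → Matrix (Fin r) (Fin r) ℤ) (a : A)
    (bβ : Module.Basis (Fin r) ℝ (Module.Dual ℝ (Vr r))) (b c : A) : Prop :=
  ∃ u u' : (Fin r → ℤ) → (Fin r → ℤ), WeylHom ρ C b a u ∧ WeylHom ρ C c a u' ∧
    ∃ i : Fin r, Kch bβ u ≠ Kch bβ u' ∧
      (Submodule.span ℝ (closure (Kch bβ u) ∩ closure (Kch bβ u')) : Set (Vr r)) =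
        dualKer (psiMap bβ (u (Pi.single i 1)))

/-- The gallery distance between the chambers `K^b` and `K^{b'}`: the minimal length of a
gallery from `K^b` to `K^{b'}`. -/
def galleryDist (ρ : Fin r → A → A) (C : A → Matrix (Fin r) (Fin r) ℤ) (a : A)
    (bβ : Module.Basis (Fin r) ℝ (Module.Dual ℝ (Vr r))) (b b' : A) : ℕ :=
  sInf {m : ℕ | ∃ g : ℕ → A, g 0 = b ∧ g m = b' ∧
    ∀ k < m, objAdj ρ C a bβ (g k) (g (k + 1))}

end GeometricRealization

/-!
Fix the base object and write `K^c` for the chamber of `c`, `γ_{c,i} = ψ_c(α_i)` for its simple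
roots and `P^c` for the roots positive on `K^c`. Since every real root at `c` is a nonnegative or
nonpositive combination of the `α_i`, each root has a sign on each chamber, the `γ_{c,i}` form a
basis of `V*`, `K^c` is cut out by `P^c`, and `S(c,c') = P^c \ P^{c'}` is the set of roots
separating `K^c` from `K^{c'}`; it is finite, being the image of an inversion set of the Weyl
groupoid. Crossing the wall `ker γ_{c,i}` exchanges `γ_{c,i}` and `-γ_{c,i}` in `P^c` and changes
nothing else, while adjacent chambers are separated only by the root of their common wall; hence
`d(K^b,K^{b'}) = |S(b,b')|` whenever `K^b ≠ K^{b'}`.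

For `z ∈ [x,y]`, start at `K^b` and keep crossing walls `ker γ_{c,i}` with `γ_{c,i}(z) < 0`. Each
crossing removes a root from `{γ ∈ P^c | γ(z) ≤ 0}`, a subset of the finite set `S(b,b')`, so this
ends in a chamber `K^e` with `z ∈ cl(K^e)`. A root separating `K^b` from `K^e`, or `K^e` from
`K^{b'}`, changes sign along `[x,y]`; thus `S(b,b') = S(b,e) ⊔ S(e,b')` and `K^e` lies on a minimal
gallery. Finally `K^c` is determined by `S(b,c)`, which for `c` on a minimal gallery is a subset
of `S(b,b')`, or of the simple roots of `b` in the degenerate case `K^b = K^{b'}`, `b ≠ b'`.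
-/

/-! ### Weyl groupoid and real roots -/

section WeylGroupoid

variable {I A : Type*} [Fintype I] [DecidableEq I] {ρ : I → A → A} {C : A → Matrix I I ℤ}

theorem gcmSigma_eq (M : Matrix I I ℤ) (i : I) (v : I → ℤ) :
    gcmSigma M i v = v - (∑ j, M i j * v j) • Pi.single i 1 := by
  funext k
  by_cases hk : k = i <;> simp [gcmSigma, hk]

theorem isLinearMap_gcmSigma (M : Matrix I I ℤ) (i : I) : IsLinearMap ℤ (gcmSigma M i) where
  map_add v w := by
    simp only [gcmSigma_eq, Pi.add_apply, mul_add, Finset.sum_add_distrib, add_smul]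
    abel
  map_smul n v := by
    simp only [gcmSigma_eq, Pi.smul_apply, smul_eq_mul, mul_left_comm _ n, ← Finset.mul_sum,
      smul_sub, mul_smul]

theorem gcmSigma_single (M : Matrix I I ℤ) (i j : I) :
    gcmSigma M i (Pi.single j 1) = Pi.single j 1 - M i j • Pi.single i 1 := by
  simp [gcmSigma_eq, Pi.single_apply]

theorem gcmSigma_gcmSigma {M M' : Matrix I I ℤ} {i : I} (h2 : M i i = 2)
    (hrow : ∀ j, M' i j = M i j) (v : I → ℤ) : gcmSigma M' i (gcmSigma M i v) = v := by
  have hsum : ∑ j, M' i j * gcmSigma M i v j = -∑ j, M i j * v j := by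
    simp only [gcmSigma_eq, hrow, Pi.sub_apply, Pi.smul_apply, smul_eq_mul, Pi.single_apply,
      mul_sub, Finset.sum_sub_distrib, mul_ite, mul_one, mul_zero, Finset.sum_ite_eq',
      Finset.mem_univ, if_true, h2]
    ring
  rw [gcmSigma_eq _ _ (gcmSigma M i v), hsum, gcmSigma_eq]
  simp

theorem WeylHom.isLinearMap {c d : A} {f : (I → ℤ) → (I → ℤ)} (h : WeylHom ρ C c d f) :
    IsLinearMap ℤ f := by
  induction h with
  | id => exact (LinearMap.id : (I → ℤ) →ₗ[ℤ] (I → ℤ)).isLinear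
  | comp i _ ih => exact ((isLinearMap_gcmSigma _ i).mk' _ ∘ₗ ih.mk' _).isLinear

theorem WeylHom.trans {b c d : A} {f g : (I → ℤ) → (I → ℤ)}
    (hf : WeylHom ρ C b c f) (hg : WeylHom ρ C c d g) : WeylHom ρ C b d (g ∘ f) := by
  induction hg with
  | id => exact hf
  | comp i _ ih => exact ih.comp i

theorem WeylHom.sigma (c : A) (i : I) : WeylHom ρ C c (ρ i c) (gcmSigma (C c) i) :=
  (WeylHom.id c).comp i

theorem WeylHom.sigma_rho (hCG : IsCartanGraph ρ C) (c : A) (i : I) :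
    WeylHom ρ C (ρ i c) c (gcmSigma (C (ρ i c)) i) := by
  simpa only [hCG.2.2.1 i c] using WeylHom.sigma (ρ := ρ) (C := C) (ρ i c) i

theorem gcmSigma_rho_gcmSigma (hCG : IsCartanGraph ρ C) (c : A) (i : I) (v : I → ℤ) :
    gcmSigma (C (ρ i c)) i (gcmSigma (C c) i v) = v :=
  gcmSigma_gcmSigma ((hCG.2.1 c).1 i) (fun j => (hCG.2.2.2 c i j).symm) v

theorem gcmSigma_gcmSigma_rho (hCG : IsCartanGraph ρ C) (c : A) (i : I) (v : I → ℤ) :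
    gcmSigma (C c) i (gcmSigma (C (ρ i c)) i v) = v :=
  gcmSigma_gcmSigma ((hCG.2.1 (ρ i c)).1 i) (fun j => hCG.2.2.2 c i j) v

theorem WeylHom.exists_inverse (hCG : IsCartanGraph ρ C) {c d : A}
    {f : (I → ℤ) → (I → ℤ)} (h : WeylHom ρ C c d f) :
    ∃ g, WeylHom ρ C d c g ∧ Function.LeftInverse g f ∧ Function.RightInverse g f := by
  induction h with
  | id => exact ⟨_root_.id, WeylHom.id _, fun _ => rfl, fun _ => rfl⟩
  | @comp d f i _ ih =>
    obtain ⟨g, hg, hgf, hfg⟩ := ih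
    refine ⟨g ∘ gcmSigma (C (ρ i d)) i, (WeylHom.sigma_rho hCG d i).trans hg, fun v => ?_,
      fun v => ?_⟩
    · simp only [Function.comp_apply, gcmSigma_rho_gcmSigma hCG, hgf v]
    · simp only [Function.comp_apply, hfg _, gcmSigma_gcmSigma_rho hCG]

theorem WeylHom.injective (hCG : IsCartanGraph ρ C) {c d : A} {f : (I → ℤ) → (I → ℤ)}
    (h : WeylHom ρ C c d f) : Function.Injective f :=
  let ⟨_, _, hgf, _⟩ := h.exists_inverse hCG
  hgf.injective

theorem WeylHom.unique (hCG : IsCartanGraph ρ C) (hsc : CGSimplyConnected ρ C) {c d : A}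
    {f f' : (I → ℤ) → (I → ℤ)} (h : WeylHom ρ C c d f) (h' : WeylHom ρ C c d f') :
    f = f' := by
  obtain ⟨g, hg, _, hfg⟩ := h'.exists_inverse hCG
  have hgf : g ∘ f = _root_.id := hsc c _ (h.trans hg)
  funext v
  rw [← hfg (f v)]
  exact congrArg f' (congrFun hgf v)

theorem WeylHom.nonempty_index {c d : A} {f : (I → ℤ) → (I → ℤ)} (h : WeylHom ρ C c d f)
    (hne : c ≠ d) : Nonempty I := by
  cases h with
  | id => exact absurd rfl hne
  | comp i _ => exact ⟨i⟩

theorem WeylHom.map_mem_realRootsAt {c d : A} {f : (I → ℤ) → (I → ℤ)} (h : WeylHom ρ C c d f)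
    {v : I → ℤ} (hv : v ∈ realRootsAt ρ C c) : f v ∈ realRootsAt ρ C d := by
  obtain ⟨b, g, j, hg, rfl⟩ := hv
  exact ⟨b, f ∘ g, j, hg.trans h, rfl⟩

theorem single_mem_realRootsAt (c : A) (j : I) : Pi.single j 1 ∈ realRootsAt ρ C c :=
  ⟨c, _root_.id, j, WeylHom.id c, rfl⟩

theorem ne_zero_of_mem_realRootsAt (hCG : IsCartanGraph ρ C) {c : A} {v : I → ℤ}
    (hv : v ∈ realRootsAt ρ C c) : v ≠ 0 := by
  obtain ⟨b, f, j, hf, rfl⟩ := hv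
  rw [← (hf.isLinearMap.mk' f).map_zero]
  exact fun h => Pi.single_ne_zero_iff.mpr one_ne_zero (hf.injective hCG h)

theorem nonneg_or_nonpos_of_mem_realRootsAt (hRS : IsRootSystemOfType ρ C (realRootsAt ρ C))
    {c : A} {v : I → ℤ} (hv : v ∈ realRootsAt ρ C c) : 0 ≤ v ∨ v ≤ 0 := by
  rw [hRS.1 c] at hv
  rcases hv with ⟨_, h⟩ | ⟨w, ⟨_, hw⟩, rfl⟩
  · exact Or.inl h
  · exact Or.inr (neg_nonpos.mpr hw)

theorem neg_mem_realRootsAt (hRS : IsRootSystemOfType ρ C (realRootsAt ρ C))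
    {c : A} {v : I → ℤ} (hv : v ∈ realRootsAt ρ C c) : -v ∈ realRootsAt ρ C c := by
  rw [hRS.1 c] at hv ⊢
  rcases hv with h | ⟨w, hw, rfl⟩
  · exact Or.inr ⟨v, h, rfl⟩
  · exact Or.inl (by simpa using hw)

theorem eq_single_of_mem_realRootsAt (hRS : IsRootSystemOfType ρ C (realRootsAt ρ C))
    {c : A} {v : I → ℤ} {i : I} (hv : v ∈ realRootsAt ρ C c) (hpos : 0 ≤ v)
    (hsupp : ∀ j, j ≠ i → v j = 0) : v = Pi.single i 1 := by
  have hvi : v = v i • Pi.single i 1 := by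
    funext j
    by_cases hj : j = i
    · subst hj; simp
    · simp [hj, hsupp j hj]
  have hmem : v ∈ {w ∈ realRootsAt ρ C c | ∃ n : ℤ, w = n • Pi.single i 1} := ⟨hv, _, hvi⟩
  rw [hRS.2.1 c i] at hmem
  rcases hmem with h | h
  · exact h
  · rw [Set.mem_singleton_iff] at h
    have := hpos i
    simp [h] at this

theorem gcmSigma_nonneg_of_mem_realRootsAt (hRS : IsRootSystemOfType ρ C (realRootsAt ρ C))
    {c : A} {i : I} {v : I → ℤ} (hv : v ∈ realRootsAt ρ C c) (hpos : 0 ≤ v)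
    (hne : v ≠ Pi.single i 1) : 0 ≤ gcmSigma (C c) i v := by
  refine (nonneg_or_nonpos_of_mem_realRootsAt hRS
    ((WeylHom.sigma c i).map_mem_realRootsAt hv)).resolve_right fun hneg => hne ?_
  refine eq_single_of_mem_realRootsAt hRS hv hpos fun j hj => le_antisymm ?_ (hpos j)
  simpa [gcmSigma, hj] using hneg j

theorem finite_inversionSet (hCG : IsCartanGraph ρ C)
    (hRS : IsRootSystemOfType ρ C (realRootsAt ρ C)) {c d : A} {w : (I → ℤ) → (I → ℤ)}
    (h : WeylHom ρ C c d w) : {α ∈ realRootsAt ρ C c | 0 ≤ α ∧ w α ≤ 0}.Finite := by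
  induction h with
  | id =>
    refine Set.finite_empty.subset fun α ⟨hα, hpos, hneg⟩ => ?_
    exact ne_zero_of_mem_realRootsAt hCG hα (le_antisymm hneg hpos)
  | @comp d f i hf ih =>
    refine (ih.union ((Set.subsingleton_singleton (a := Pi.single i 1)).preimage
      (hf.injective hCG)).finite).subset fun α ⟨hα, hpos, hneg⟩ => ?_
    have hfα := hf.map_mem_realRootsAt hα
    refine (nonneg_or_nonpos_of_mem_realRootsAt hRS hfα).symm.imp (fun h => ⟨hα, hpos, h⟩)
      fun hfpos => by_contra fun hne => ?_
    exact ne_zero_of_mem_realRootsAt hCG ((WeylHom.sigma d i).map_mem_realRootsAt hfα)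
      (le_antisymm hneg (gcmSigma_nonneg_of_mem_realRootsAt hRS hfα hfpos hne))

end WeylGroupoid

/-! ### Chambers and positive roots -/

section PsiMap

variable {r : ℕ} (bβ : Module.Basis (Fin r) ℝ (Module.Dual ℝ (Vr r)))

def psiMapHom : (Fin r → ℤ) →+ Module.Dual ℝ (Vr r) where
  toFun := psiMap bβ
  map_zero' := by simp [psiMap]
  map_add' v w := by simp [psiMap, add_smul, Finset.sum_add_distrib]

theorem psiMap_neg (v : Fin r → ℤ) : psiMap bβ (-v) = -psiMap bβ v :=
  (psiMapHom bβ).map_neg v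

theorem psiMap_apply_of_isLinearMap {f : (Fin r → ℤ) → (Fin r → ℤ)} (hf : IsLinearMap ℤ f)
    (α : Fin r → ℤ) :
    psiMap bβ (f α) = ∑ j, (α j : ℝ) • psiMap bβ (f (Pi.single j 1)) := by
  set P := (psiMapHom bβ).comp (hf.mk' f).toAddMonoidHom
  have hα : α = ∑ j, α j • Pi.single j (1 : ℤ) := by
    simpa [← Pi.single_smul'] using (Finset.univ_sum_single α).symm
  calc psiMap bβ (f α) = P α := rfl
    _ = ∑ j, α j • P (Pi.single j 1) := by
      conv_lhs => rw [hα]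
      rw [map_sum]
      simp only [map_zsmul]
    _ = _ := by
      refine Finset.sum_congr rfl fun j _ => ?_
      exact (Int.cast_smul_eq_zsmul ℝ (α j) _).symm

theorem psiMap_single (j : Fin r) : psiMap bβ (Pi.single j 1) = bβ j := by
  simp [psiMap, Pi.single_apply]

theorem top_le_span_psiMap {f : (Fin r → ℤ) → (Fin r → ℤ)} (hf : IsLinearMap ℤ f)
    (hsurj : Function.Surjective f) :
    ⊤ ≤ Submodule.span ℝ (Set.range fun i => psiMap bβ (f (Pi.single i 1))) := by
  rw [← bβ.span_eq, Submodule.span_le]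
  rintro _ ⟨j, rfl⟩
  obtain ⟨v, hv⟩ := hsurj (Pi.single j 1)
  rw [← psiMap_single, ← hv, psiMap_apply_of_isLinearMap bβ hf]
  exact Submodule.sum_mem _ fun k _ => Submodule.smul_mem _ _ (Submodule.subset_span ⟨k, rfl⟩)

end PsiMap

theorem closure_setOf_forall_pos {ι E : Type*} [NormedAddCommGroup E] [NormedSpace ℝ E]
    [FiniteDimensional ℝ E] (φ : ι → Module.Dual ℝ E) {p : E} (hp : ∀ i, 0 < φ i p) :
    closure {x | ∀ i, 0 < φ i x} = {x | ∀ i, 0 ≤ φ i x} := by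
  refine subset_antisymm (closure_minimal (fun x hx i => (hx i).le) ?_) fun q hq => ?_
  · simp only [Set.ofPred_forall]
    exact isClosed_iInter fun i => isClosed_le continuous_const
      (φ i).continuous_of_finiteDimensional
  · have hlim : Filter.Tendsto (fun t : ℝ => q + t • p) (nhdsWithin 0 (Set.Ioi 0)) (nhds q) := by
      have hc : Continuous fun t : ℝ => q + t • p := by fun_prop
      simpa using (hc.tendsto 0).mono_left nhdsWithin_le_nhds
    refine mem_closure_of_tendsto hlim (eventually_nhdsWithin_of_forall fun t ht i => ?_)
    simp only [map_add, map_smul, smul_eq_mul]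
    exact add_pos_of_nonneg_of_pos (hq i) (mul_pos ht (hp i))

structure CartanRealization (r : ℕ) (A : Type*) where
  ρ : Fin r → A → A
  C : A → Matrix (Fin r) (Fin r) ℤ
  base : A
  bβ : Module.Basis (Fin r) ℝ (Module.Dual ℝ (Vr r))
  isCartanGraph : IsCartanGraph ρ C
  connected : CGConnected ρ C
  simplyConnected : CGSimplyConnected ρ C
  isRootSystem : IsRootSystemOfType ρ C (realRootsAt ρ C)

namespace CartanRealization

open scoped Pointwise

variable {r : ℕ} {A : Type*} (G : CartanRealization r A)

def toBase (c : A) : (Fin r → ℤ) → (Fin r → ℤ) := (G.connected c G.base).choose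

def chamber (c : A) : Set (Vr r) := Kch G.bβ (G.toBase c)

def simpleRoot (c : A) (i : Fin r) : Module.Dual ℝ (Vr r) :=
  psiMap G.bβ (G.toBase c (Pi.single i 1))

def roots : Set (Module.Dual ℝ (Vr r)) := geoR G.ρ G.C G.base G.bβ

def posRoots (c : A) : Set (Module.Dual ℝ (Vr r)) :=
  {γ ∈ G.roots | ∀ x ∈ G.chamber c, 0 < γ x}

/-- `S(K^c, K^{c'})`: a root outside `posRoots c'` is negative on `K^{c'}`
(`neg_mem_posRoots_iff`). -/
def sep (c c' : A) : Set (Module.Dual ℝ (Vr r)) := G.posRoots c \ G.posRoots c'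

theorem weylHom_toBase (c : A) : WeylHom G.ρ G.C c G.base (G.toBase c) :=
  (G.connected c G.base).choose_spec

theorem eq_toBase {c : A} {u : (Fin r → ℤ) → (Fin r → ℤ)} (hu : WeylHom G.ρ G.C c G.base u) :
    u = G.toBase c :=
  hu.unique G.isCartanGraph G.simplyConnected (G.weylHom_toBase c)

theorem chamber_eq_Kch {c : A} {u : (Fin r → ℤ) → (Fin r → ℤ)}
    (hu : WeylHom G.ρ G.C c G.base u) : G.chamber c = Kch G.bβ u := by
  rw [G.eq_toBase hu]
  rfl

theorem toBase_rho (c : A) (i : Fin r) :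
    G.toBase (G.ρ i c) = G.toBase c ∘ gcmSigma (G.C (G.ρ i c)) i :=
  (G.eq_toBase ((WeylHom.sigma_rho G.isCartanGraph c i).trans (G.weylHom_toBase c))).symm

theorem psiMap_toBase_apply (c : A) (α : Fin r → ℤ) (x : Vr r) :
    psiMap G.bβ (G.toBase c α) x = ∑ j, (α j : ℝ) * G.simpleRoot c j x := by
  simp [psiMap_apply_of_isLinearMap G.bβ (G.weylHom_toBase c).isLinearMap α, simpleRoot]

theorem toBase_neg (c : A) (α : Fin r → ℤ) : G.toBase c (-α) = -G.toBase c α :=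
  ((G.weylHom_toBase c).isLinearMap.mk' _).map_neg α

def simpleRootBasis (c : A) : Module.Basis (Fin r) ℝ (Module.Dual ℝ (Vr r)) :=
  basisOfTopLeSpanOfCardEqFinrank (G.simpleRoot c)
    (top_le_span_psiMap G.bβ (G.weylHom_toBase c).isLinearMap
      (let ⟨_, _, _, hfg⟩ := (G.weylHom_toBase c).exists_inverse G.isCartanGraph
       hfg.surjective))
    (by simp [Module.finrank_eq_card_basis G.bβ])

theorem simpleRootBasis_apply (c : A) (i : Fin r) : G.simpleRootBasis c i = G.simpleRoot c i :=
  congrFun (coe_basisOfTopLeSpanOfCardEqFinrank _ _ _) i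

def coweight (c : A) : Module.Basis (Fin r) ℝ (Vr r) :=
  (G.simpleRootBasis c).dualBasis.map (Module.evalEquiv ℝ (Vr r)).symm

theorem coweight_repr (c : A) (x : Vr r) (k : Fin r) :
    (G.coweight c).repr x k = G.simpleRoot c k x := by
  simp [coweight, simpleRootBasis_apply]

theorem simpleRoot_coweight (c : A) (j k : Fin r) :
    G.simpleRoot c j (G.coweight c k) = if j = k then 1 else 0 := by
  rw [← simpleRootBasis_apply]
  simp [coweight, Finsupp.single_apply]

theorem chamber_nonempty (c : A) : (G.chamber c).Nonempty := by
  refine ⟨(G.coweight c).equivFun.symm fun _ => 1, fun i => ?_⟩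
  show 0 < G.simpleRoot c i _
  rw [← G.coweight_repr, ← Module.Basis.equivFun_apply, LinearEquiv.apply_symm_apply]
  exact one_pos

theorem closure_chamber (c : A) :
    closure (G.chamber c) = {x | ∀ i, 0 ≤ G.simpleRoot c i x} :=
  let ⟨_, hp⟩ := G.chamber_nonempty c
  closure_setOf_forall_pos (G.simpleRoot c) hp

theorem mem_roots_iff (c : A) {γ : Module.Dual ℝ (Vr r)} :
    γ ∈ G.roots ↔ ∃ α ∈ realRootsAt G.ρ G.C c, γ = psiMap G.bβ (G.toBase c α) := by
  constructor
  · rintro ⟨v, hv, rfl⟩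
    obtain ⟨g, hg, _, hfg⟩ := (G.weylHom_toBase c).exists_inverse G.isCartanGraph
    exact ⟨g v, hg.map_mem_realRootsAt hv, by rw [hfg v]⟩
  · rintro ⟨α, hα, rfl⟩
    exact ⟨_, (G.weylHom_toBase c).map_mem_realRootsAt hα, rfl⟩

theorem neg_mem_roots {γ : Module.Dual ℝ (Vr r)} (hγ : γ ∈ G.roots) : -γ ∈ G.roots := by
  obtain ⟨v, hv, rfl⟩ := hγ
  exact ⟨-v, neg_mem_realRootsAt G.isRootSystem hv, psiMap_neg G.bβ v⟩

theorem simpleRoot_mem_roots (c : A) (i : Fin r) : G.simpleRoot c i ∈ G.roots :=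
  (G.mem_roots_iff c).mpr ⟨_, single_mem_realRootsAt c i, rfl⟩

theorem mem_posRoots_of_nonneg {c : A} {α : Fin r → ℤ} (hα : α ∈ realRootsAt G.ρ G.C c)
    (hpos : 0 ≤ α) : psiMap G.bβ (G.toBase c α) ∈ G.posRoots c := by
  refine ⟨(G.mem_roots_iff c).mpr ⟨α, hα, rfl⟩, fun x hx => ?_⟩
  obtain ⟨j, hj⟩ := Function.ne_iff.mp (ne_zero_of_mem_realRootsAt G.isCartanGraph hα)
  rw [G.psiMap_toBase_apply]
  refine Finset.sum_pos' (fun k _ => mul_nonneg (by exact_mod_cast hpos k) (hx k).le)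
    ⟨j, Finset.mem_univ j, mul_pos ?_ (hx j)⟩
  exact_mod_cast (hpos j).lt_of_ne' hj

theorem simpleRoot_mem_posRoots (c : A) (i : Fin r) : G.simpleRoot c i ∈ G.posRoots c :=
  G.mem_posRoots_of_nonneg (single_mem_realRootsAt c i) (Pi.single_nonneg.mpr zero_le_one)

theorem neg_notMem_posRoots {c : A} {γ : Module.Dual ℝ (Vr r)} (hγ : γ ∈ G.posRoots c) :
    -γ ∉ G.posRoots c := fun hneg =>
  let ⟨x, hx⟩ := G.chamber_nonempty c
  (neg_pos.mp (hneg.2 x hx)).not_gt (hγ.2 x hx)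

theorem mem_posRoots_or_neg_mem (c : A) {γ : Module.Dual ℝ (Vr r)} (hγ : γ ∈ G.roots) :
    γ ∈ G.posRoots c ∨ -γ ∈ G.posRoots c := by
  obtain ⟨α, hα, rfl⟩ := (G.mem_roots_iff c).mp hγ
  refine (nonneg_or_nonpos_of_mem_realRootsAt G.isRootSystem hα).imp
    (G.mem_posRoots_of_nonneg hα) fun hneg => ?_
  rw [← psiMap_neg, ← toBase_neg]
  exact G.mem_posRoots_of_nonneg (neg_mem_realRootsAt G.isRootSystem hα) (neg_nonneg.mpr hneg)

theorem neg_mem_posRoots_iff (c : A) {γ : Module.Dual ℝ (Vr r)} (hγ : γ ∈ G.roots) :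
    -γ ∈ G.posRoots c ↔ γ ∉ G.posRoots c :=
  ⟨fun hneg hpos => G.neg_notMem_posRoots hpos hneg, (G.mem_posRoots_or_neg_mem c hγ).resolve_left⟩

theorem mem_posRoots_iff (c : A) {γ : Module.Dual ℝ (Vr r)} :
    γ ∈ G.posRoots c ↔ ∃ α ∈ realRootsAt G.ρ G.C c, 0 ≤ α ∧ γ = psiMap G.bβ (G.toBase c α) := by
  refine ⟨fun hγ => ?_, fun ⟨α, hα, hpos, hγ⟩ => hγ ▸ G.mem_posRoots_of_nonneg hα hpos⟩
  obtain ⟨α, hα, rfl⟩ := (G.mem_roots_iff c).mp hγ.1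
  refine ⟨α, hα, (nonneg_or_nonpos_of_mem_realRootsAt G.isRootSystem hα).resolve_right
    fun hneg => G.neg_notMem_posRoots hγ ?_, rfl⟩
  rw [← psiMap_neg, ← toBase_neg]
  exact G.mem_posRoots_of_nonneg (neg_mem_realRootsAt G.isRootSystem hα) (neg_nonneg.mpr hneg)

theorem chamber_eq_setOf_posRoots (c : A) :
    G.chamber c = {x | ∀ γ ∈ G.posRoots c, 0 < γ x} :=
  subset_antisymm (fun _ hx _ hγ => hγ.2 _ hx)
    fun _ hx i => hx _ (G.simpleRoot_mem_posRoots c i)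

theorem nonneg_of_mem_closure {c : A} {γ : Module.Dual ℝ (Vr r)} (hγ : γ ∈ G.posRoots c)
    {x : Vr r} (hx : x ∈ closure (G.chamber c)) : 0 ≤ γ x :=
  closure_minimal (fun y hy => (hγ.2 y hy).le)
    (isClosed_le continuous_const γ.continuous_of_finiteDimensional) hx

theorem simpleRoot_rho (c : A) (i j : Fin r) :
    G.simpleRoot (G.ρ i c) j = G.simpleRoot c j - (G.C c i j : ℝ) • G.simpleRoot c i := by
  have hlin := (G.weylHom_toBase c).isLinearMap
  have hC : G.C (G.ρ i c) i j = G.C c i j := (G.isCartanGraph.2.2.2 c i j).symm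
  rw [simpleRoot, toBase_rho, Function.comp_apply, gcmSigma_single, hlin.map_sub, hlin.map_smul,
    hC, Int.cast_smul_eq_zsmul ℝ (G.C c i j) (G.simpleRoot c i)]
  exact ((psiMapHom G.bβ).map_sub _ _).trans (congrArg _ ((psiMapHom G.bβ).map_zsmul _ _))

theorem simpleRoot_rho_self (c : A) (i : Fin r) :
    G.simpleRoot (G.ρ i c) i = -G.simpleRoot c i := by
  rw [simpleRoot_rho, (G.isCartanGraph.2.1 c).1 i]
  module

theorem posRoots_sdiff_singleton_subset_rho (c : A) (i : Fin r) :
    G.posRoots c \ {G.simpleRoot c i} ⊆ G.posRoots (G.ρ i c) := by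
  rintro _ ⟨hγ, hne⟩
  obtain ⟨α, hα, hpos, rfl⟩ := (G.mem_posRoots_iff c).mp hγ
  have hαi : α ≠ Pi.single i 1 := by rintro rfl; exact hne rfl
  have hσ := gcmSigma_rho_gcmSigma G.isCartanGraph c i α
  refine (G.mem_posRoots_iff _).mpr ⟨_, (WeylHom.sigma c i).map_mem_realRootsAt hα,
    gcmSigma_nonneg_of_mem_realRootsAt G.isRootSystem hα hpos hαi, ?_⟩
  rw [toBase_rho, Function.comp_apply, hσ]

theorem posRoots_rho (c : A) (i : Fin r) :
    G.posRoots (G.ρ i c) = insert (-G.simpleRoot c i) (G.posRoots c \ {G.simpleRoot c i}) := by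
  refine subset_antisymm (fun γ hγ => ?_)
    (insert_subset ?_ (G.posRoots_sdiff_singleton_subset_rho c i))
  · have hback := G.posRoots_sdiff_singleton_subset_rho (G.ρ i c) i
    rw [G.isCartanGraph.2.2.1 i c, simpleRoot_rho_self] at hback
    by_cases h : γ = -G.simpleRoot c i
    · exact .inl h
    · refine .inr ⟨hback ⟨hγ, h⟩, fun hγi => G.neg_notMem_posRoots hγ ?_⟩
      rw [mem_singleton_iff.mp hγi, ← simpleRoot_rho_self]
      exact G.simpleRoot_mem_posRoots _ i
  · rw [← simpleRoot_rho_self]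
    exact G.simpleRoot_mem_posRoots _ i

theorem posRoots_eq_of_sep_eq_empty {c c' : A} (h : G.sep c c' = ∅) :
    G.posRoots c = G.posRoots c' := by
  have hsub : G.posRoots c ⊆ G.posRoots c' := sdiff_eq_empty.mp h
  refine subset_antisymm hsub fun γ hγ => by_contra fun hγc => ?_
  exact G.neg_notMem_posRoots hγ (hsub ((G.neg_mem_posRoots_iff c hγ.1).mpr hγc))

theorem chamber_eq_of_sep_eq_empty {c c' : A} (h : G.sep c c' = ∅) :
    G.chamber c = G.chamber c' := by
  rw [chamber_eq_setOf_posRoots, chamber_eq_setOf_posRoots, G.posRoots_eq_of_sep_eq_empty h]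

theorem sep_subset_union (c c' c'' : A) : G.sep c c'' ⊆ G.sep c c' ∪ G.sep c' c'' := by
  intro γ ⟨h, h''⟩
  by_cases h' : γ ∈ G.posRoots c'
  exacts [.inr ⟨h', h''⟩, .inl ⟨h, h'⟩]

theorem finite_sep (c c' : A) : (G.sep c c').Finite := by
  obtain ⟨w, hw⟩ := G.connected c c'
  have hcomp : G.toBase c = G.toBase c' ∘ w := (G.eq_toBase (hw.trans (G.weylHom_toBase c'))).symm
  refine ((finite_inversionSet G.isCartanGraph G.isRootSystem hw).image
    fun α => psiMap G.bβ (G.toBase c α)).subset ?_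
  rintro _ ⟨hγ, hγ'⟩
  obtain ⟨α, hα, hpos, rfl⟩ := (G.mem_posRoots_iff c).mp hγ
  have hwα := hw.map_mem_realRootsAt hα
  refine ⟨α, ⟨hα, hpos, (nonneg_or_nonpos_of_mem_realRootsAt G.isRootSystem hwα).resolve_left
    fun hwpos => hγ' ?_⟩, rfl⟩
  rw [hcomp]
  exact G.mem_posRoots_of_nonneg hwα hwpos

theorem exists_simpleRoot_mem_sep {c c' : A} (h : (G.sep c c').Nonempty) :
    ∃ i, G.simpleRoot c i ∈ G.sep c c' := by
  obtain ⟨γ, hγ, hγ'⟩ := h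
  obtain ⟨y, hy⟩ := G.chamber_nonempty c'
  have hneg : γ y < 0 := by
    have := ((G.neg_mem_posRoots_iff c' hγ.1).mpr hγ').2 y hy
    rwa [LinearMap.neg_apply, neg_pos] at this
  obtain ⟨α, _, hpos, rfl⟩ := (G.mem_posRoots_iff c).mp hγ
  rw [psiMap_toBase_apply] at hneg
  obtain ⟨i, -, hi⟩ := Finset.exists_lt_of_sum_lt (hneg.trans_eq Finset.sum_const_zero.symm)
  have hi : G.simpleRoot c i y < 0 := by
    by_contra! hnn
    exact (mul_nonneg (by exact_mod_cast hpos i) hnn).not_gt hi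
  exact ⟨i, G.simpleRoot_mem_posRoots c i,
    fun hmem => (hmem.2 y hy).not_gt hi⟩

theorem sep_rho {c c' : A} {i : Fin r} (hi : G.simpleRoot c i ∈ G.sep c c') :
    G.sep (G.ρ i c) c' = G.sep c c' \ {G.simpleRoot c i} := by
  have hneg : -G.simpleRoot c i ∈ G.posRoots c' :=
    (G.neg_mem_posRoots_iff c' (G.simpleRoot_mem_roots c i)).mpr hi.2
  rw [sep, sep, posRoots_rho, insert_sdiff_of_mem _ hneg, sdiff_sdiff_comm]

theorem posRoots_eq_sdiff_sep_union_neg (b c : A) :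
    G.posRoots c = (G.posRoots b \ G.sep b c) ∪ -G.sep b c := by
  ext γ
  simp only [sep, mem_union, mem_sdiff, Set.mem_neg]
  by_cases hγ : γ ∈ G.roots
  · rw [G.neg_mem_posRoots_iff b hγ, G.neg_mem_posRoots_iff c hγ]
    tauto
  · have hc : γ ∉ G.posRoots c := fun h => hγ h.1
    have hb : -γ ∉ G.posRoots b := fun h => hγ (neg_neg γ ▸ G.neg_mem_roots h.1)
    tauto

/-! ### Adjacency and galleries -/

theorem eq_simpleRoot_of_apply_coweight_eq_zero {c : A} {i : Fin r}
    {γ : Module.Dual ℝ (Vr r)} (hγ : γ ∈ G.posRoots c)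
    (h : ∀ k, k ≠ i → γ (G.coweight c k) = 0) : γ = G.simpleRoot c i := by
  obtain ⟨α, hα, hpos, rfl⟩ := (G.mem_posRoots_iff c).mp hγ
  suffices α = Pi.single i 1 by rw [this]; rfl
  refine eq_single_of_mem_realRootsAt G.isRootSystem hα hpos fun k hk => ?_
  have := h k hk
  simpa [psiMap_toBase_apply, simpleRoot_coweight] using this

/-- A separating root is `≥ 0` on `cl(K^c)` and `≤ 0` on `cl(K^{c'})`, so it vanishes on the
common wall, which contains the coweights `k ≠ i`. -/
theorem sep_subset_of_objAdj {c c' : A} (h : objAdj G.ρ G.C G.base G.bβ c c') :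
    ∃ i, G.sep c c' ⊆ {G.simpleRoot c i} := by
  obtain ⟨u, u', hu, hu', i, -, hspan⟩ := h
  obtain rfl := G.eq_toBase hu
  obtain rfl := G.eq_toBase hu'
  refine ⟨i, fun γ ⟨hγ, hγ'⟩ => G.eq_simpleRoot_of_apply_coweight_eq_zero hγ fun k hk => ?_⟩
  have hneg := (G.neg_mem_posRoots_iff c' hγ.1).mpr hγ'
  have hvanish : Submodule.span ℝ (closure (G.chamber c) ∩ closure (G.chamber c')) ≤
      LinearMap.ker γ := Submodule.span_le.mpr fun s ⟨hs, hs'⟩ =>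
    le_antisymm (neg_nonneg.mp (G.nonneg_of_mem_closure hneg hs')) (G.nonneg_of_mem_closure hγ hs)
  refine hvanish ?_
  change G.coweight c k ∈ (Submodule.span ℝ (closure (Kch G.bβ (G.toBase c)) ∩
    closure (Kch G.bβ (G.toBase c'))) : Set (Vr r))
  rw [hspan]
  show G.simpleRoot c i _ = 0
  rw [simpleRoot_coweight, if_neg (Ne.symm hk)]

theorem coweight_mem_closure_inter {c : A} {i k : Fin r} (hk : k ≠ i) :
    G.coweight c k ∈ closure (G.chamber c) ∩ closure (G.chamber (G.ρ i c)) := by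
  rw [closure_chamber, closure_chamber]
  refine ⟨fun j => ?_, fun j => ?_⟩
  · rw [simpleRoot_coweight]; split_ifs <;> norm_num
  · simp only [simpleRoot_rho, LinearMap.sub_apply, LinearMap.smul_apply, simpleRoot_coweight,
      if_neg (Ne.symm hk), smul_zero, sub_zero]
    split_ifs <;> norm_num

theorem span_closure_chamber_inter_rho (c : A) (i : Fin r) :
    (Submodule.span ℝ (closure (G.chamber c) ∩ closure (G.chamber (G.ρ i c))) : Set (Vr r)) =
      dualKer (G.simpleRoot c i) := by
  refine subset_antisymm (fun x hx => ?_) fun x hx => ?_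
  · refine LinearMap.mem_ker.mp (Submodule.span_le.mpr ?_ hx)
    rintro s ⟨hs, hs'⟩
    rw [closure_chamber] at hs hs'
    have := hs' i
    rw [simpleRoot_rho_self, LinearMap.neg_apply, neg_nonneg] at this
    exact le_antisymm this (hs i)
  · rw [← (G.coweight c).sum_repr x]
    refine Submodule.sum_mem _ fun k _ => ?_
    by_cases hk : k = i
    · rw [hk, coweight_repr]
      simp only [show G.simpleRoot c i x = 0 from hx, zero_smul, Submodule.zero_mem]
    · exact Submodule.smul_mem _ _ (Submodule.subset_span (G.coweight_mem_closure_inter hk))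

theorem chamber_ne_rho (c : A) (i : Fin r) : G.chamber c ≠ G.chamber (G.ρ i c) := by
  intro h
  obtain ⟨x, hx⟩ := G.chamber_nonempty c
  have hx' : 0 < G.simpleRoot (G.ρ i c) i x := (h ▸ hx) i
  rw [simpleRoot_rho_self, LinearMap.neg_apply, neg_pos] at hx'
  exact hx'.not_gt (hx i)

theorem objAdj_rho (c : A) (i : Fin r) : objAdj G.ρ G.C G.base G.bβ c (G.ρ i c) :=
  ⟨_, _, G.weylHom_toBase c, G.weylHom_toBase _, i, G.chamber_ne_rho c i,
    G.span_closure_chamber_inter_rho c i⟩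

theorem objAdj_of_chamber_eq {c c' c'' : A} (h : objAdj G.ρ G.C G.base G.bβ c c')
    (h' : G.chamber c' = G.chamber c'') : objAdj G.ρ G.C G.base G.bβ c c'' := by
  obtain ⟨u, u', hu, hu', i, hne, hspan⟩ := h
  obtain rfl := G.eq_toBase hu
  obtain rfl := G.eq_toBase hu'
  change Kch G.bβ (G.toBase c') = Kch G.bβ (G.toBase c'') at h'
  exact ⟨_, _, hu, G.weylHom_toBase c'', i, h' ▸ hne, h' ▸ hspan⟩

def IsGallery (m : ℕ) (g : ℕ → A) (c c' : A) : Prop :=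
  g 0 = c ∧ g m = c' ∧ ∀ k < m, objAdj G.ρ G.C G.base G.bβ (g k) (g (k + 1))

theorem isGallery_zero (c : A) : G.IsGallery 0 (fun _ => c) c c :=
  ⟨rfl, rfl, fun k hk => absurd hk k.not_lt_zero⟩

theorem isGallery_one {c c' : A} (h : objAdj G.ρ G.C G.base G.bβ c c') :
    G.IsGallery 1 (fun k => if k = 0 then c else c') c c' :=
  ⟨rfl, rfl, fun k hk => by simpa [Nat.lt_one_iff.mp hk] using h⟩

variable {G}

theorem IsGallery.append {m n : ℕ} {g g' : ℕ → A} {c c' c'' : A} (h : G.IsGallery m g c c')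
    (h' : G.IsGallery n g' c' c'') :
    G.IsGallery (m + n) (fun k => if k ≤ m then g k else g' (k - m)) c c'' := by
  refine ⟨by simp [h.1], ?_, fun k hk => ?_⟩
  · show (if m + n ≤ m then g (m + n) else g' (m + n - m)) = c''
    rcases Nat.eq_zero_or_pos n with rfl | hn
    · simp [h.2.1, ← h'.1, h'.2.1]
    · rw [if_neg (by omega), Nat.add_sub_cancel_left, h'.2.1]
  · show objAdj _ _ _ _ (if k ≤ m then g k else g' (k - m))
      (if k + 1 ≤ m then g (k + 1) else g' (k + 1 - m))
    rcases lt_trichotomy k m with hkm | rfl | hkm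
    · rw [if_pos hkm.le, if_pos (Nat.succ_le_of_lt hkm)]
      exact h.2.2 k hkm
    · rw [if_pos le_rfl, if_neg (by omega), h.2.1, ← h'.1, Nat.add_sub_cancel_left]
      exact h'.2.2 0 (by omega)
    · rw [if_neg (by omega), if_neg (by omega), show k + 1 - m = k - m + 1 by omega]
      exact h'.2.2 (k - m) (by omega)

theorem IsGallery.galleryDist_le {m : ℕ} {g : ℕ → A} {c c' : A} (h : G.IsGallery m g c c') :
    galleryDist G.ρ G.C G.base G.bβ c c' ≤ m :=
  Nat.sInf_le ⟨g, h⟩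

theorem IsGallery.take {m k : ℕ} {g : ℕ → A} {c c' : A} (h : G.IsGallery m g c c')
    (hk : k ≤ m) : G.IsGallery k g c (g k) :=
  ⟨h.1, rfl, fun j hj => h.2.2 j (hj.trans_le hk)⟩

theorem IsGallery.drop {m k : ℕ} {g : ℕ → A} {c c' : A} (h : G.IsGallery m g c c')
    (hk : k ≤ m) : G.IsGallery (m - k) (fun j => g (k + j)) (g k) c' :=
  ⟨rfl, by simpa [Nat.add_sub_cancel' hk] using h.2.1, fun j hj => h.2.2 (k + j) (by omega)⟩

theorem IsGallery.ncard_sep_le {m : ℕ} {g : ℕ → A} {c c' : A} (h : G.IsGallery m g c c') :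
    (G.sep c c').ncard ≤ m := by
  induction m generalizing c' with
  | zero => simp [← h.2.1, ← h.1, sep]
  | succ m ih =>
    obtain ⟨i, hi⟩ := G.sep_subset_of_objAdj (h.2.1 ▸ h.2.2 m m.lt_succ_self)
    calc (G.sep c c').ncard ≤ (G.sep c (g m) ∪ G.sep (g m) c').ncard :=
          ncard_le_ncard (G.sep_subset_union _ _ _) ((G.finite_sep _ _).union (G.finite_sep _ _))
      _ ≤ (G.sep c (g m)).ncard + (G.sep (g m) c').ncard := ncard_union_le _ _
      _ ≤ m + 1 := add_le_add (ih (h.take m.le_succ))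
          ((ncard_le_ncard hi).trans (ncard_singleton _).le)

variable (G)

theorem exists_isGallery_ncard_sep {c c' : A} (h : (G.sep c c').Nonempty) :
    ∃ g, G.IsGallery (G.sep c c').ncard g c c' := by
  obtain ⟨n, hn⟩ := Nat.exists_eq_add_one_of_ne_zero ((ncard_pos (G.finite_sep c c')).mpr h).ne'
  rw [hn]
  induction n generalizing c with
  | zero =>
    obtain ⟨i, hi⟩ := G.exists_simpleRoot_mem_sep h
    have hempty : G.sep (G.ρ i c) c' = ∅ := by
      rw [← ncard_eq_zero (G.finite_sep _ _), G.sep_rho hi, ncard_sdiff_singleton_of_mem hi, hn]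
    exact ⟨_, G.isGallery_one (G.objAdj_of_chamber_eq (G.objAdj_rho c i)
      (G.chamber_eq_of_sep_eq_empty hempty))⟩
  | succ n ih =>
    obtain ⟨i, hi⟩ := G.exists_simpleRoot_mem_sep h
    have hn' : (G.sep (G.ρ i c) c').ncard = n + 1 := by
      rw [G.sep_rho hi, ncard_sdiff_singleton_of_mem hi, hn, Nat.add_sub_cancel]
    obtain ⟨g, hg⟩ := ih ((ncard_pos (G.finite_sep _ _)).mp (by omega)) hn'
    have := (G.isGallery_one (G.objAdj_rho c i)).append hg
    rw [Nat.add_comm 1] at this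
    exact ⟨_, this⟩

theorem exists_isGallery_two_of_chamber_eq {c c' : A} (hne : c ≠ c')
    (h : G.chamber c = G.chamber c') : ∃ g, G.IsGallery 2 g c c' := by
  obtain ⟨w, hw⟩ := G.connected c c'
  obtain ⟨i⟩ := hw.nonempty_index hne
  have hback : objAdj G.ρ G.C G.base G.bβ (G.ρ i c) c' := by
    refine G.objAdj_of_chamber_eq (G.objAdj_rho (G.ρ i c) i) ?_
    rw [G.isCartanGraph.2.2.1 i c, h]
  exact ⟨_, (G.isGallery_one (G.objAdj_rho c i)).append (G.isGallery_one hback)⟩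

theorem exists_isGallery (c c' : A) : ∃ m g, G.IsGallery m g c c' := by
  by_cases h : (G.sep c c').Nonempty
  · exact ⟨_, G.exists_isGallery_ncard_sep h⟩
  by_cases hcc : c = c'
  · subst hcc
    exact ⟨0, _, G.isGallery_zero c⟩
  exact ⟨2, G.exists_isGallery_two_of_chamber_eq hcc
    (G.chamber_eq_of_sep_eq_empty (not_nonempty_iff_eq_empty.mp h))⟩

theorem exists_isGallery_galleryDist (c c' : A) :
    ∃ g, G.IsGallery (galleryDist G.ρ G.C G.base G.bβ c c') g c c' :=
  Nat.sInf_mem (G.exists_isGallery c c')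

theorem galleryDist_eq_ncard_sep {c c' : A} (h : (G.sep c c').Nonempty) :
    galleryDist G.ρ G.C G.base G.bβ c c' = (G.sep c c').ncard :=
  le_antisymm (G.exists_isGallery_ncard_sep h).choose_spec.galleryDist_le
    (G.exists_isGallery_galleryDist c c').choose_spec.ncard_sep_le

theorem galleryDist_le_two {c c' : A} (h : G.sep c c' = ∅) :
    galleryDist G.ρ G.C G.base G.bβ c c' ≤ 2 := by
  by_cases hcc : c = c'
  · subst hcc
    exact (G.isGallery_zero c).galleryDist_le.trans zero_le_two
  · exact (G.exists_isGallery_two_of_chamber_eq hcc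
      (G.chamber_eq_of_sep_eq_empty h)).choose_spec.galleryDist_le

def OnMinimalGallery (b b' c : A) : Prop :=
  ∃ m g, G.IsGallery m g b b' ∧ m = galleryDist G.ρ G.C G.base G.bβ b b' ∧ ∃ k ≤ m, g k = c

theorem onMinimalGallery_left (b b' : A) : G.OnMinimalGallery b b' b :=
  let ⟨g, hg⟩ := G.exists_isGallery_galleryDist b b'
  ⟨_, g, hg, rfl, 0, Nat.zero_le _, hg.1⟩

theorem onMinimalGallery_right (b b' : A) : G.OnMinimalGallery b b' b' :=
  let ⟨g, hg⟩ := G.exists_isGallery_galleryDist b b'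
  ⟨_, g, hg, rfl, _, le_rfl, hg.2.1⟩

theorem exists_onMinimalGallery_of_ncard_sep_add {b b' e : A}
    (h : (G.sep b e).ncard + (G.sep e b').ncard = (G.sep b b').ncard) :
    ∃ c, G.OnMinimalGallery b b' c ∧ G.chamber c = G.chamber e := by
  rcases (G.sep b e).eq_empty_or_nonempty with h1 | h1
  · exact ⟨b, G.onMinimalGallery_left b b', G.chamber_eq_of_sep_eq_empty h1⟩
  rcases (G.sep e b').eq_empty_or_nonempty with h2 | h2
  · exact ⟨b', G.onMinimalGallery_right b b', (G.chamber_eq_of_sep_eq_empty h2).symm⟩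
  obtain ⟨g1, hg1⟩ := G.exists_isGallery_ncard_sep h1
  obtain ⟨g2, hg2⟩ := G.exists_isGallery_ncard_sep h2
  have hpos : (G.sep b b').Nonempty := by
    rw [← ncard_pos (G.finite_sep _ _), ← h]
    exact Nat.add_pos_left ((ncard_pos (G.finite_sep _ _)).mpr h1) _
  refine ⟨e, ⟨_, _, hg1.append hg2, by rw [h, G.galleryDist_eq_ncard_sep hpos], _,
    Nat.le_add_right _ _, by simp [hg1.2.1]⟩, rfl⟩

theorem sep_subset_range_simpleRoot {c c' : A} (h : (G.sep c c').ncard ≤ 1) :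
    G.sep c c' ⊆ range (G.simpleRoot c) := by
  rcases (G.sep c c').eq_empty_or_nonempty with hempty | hne
  · simp [hempty]
  obtain ⟨i, hi⟩ := G.exists_simpleRoot_mem_sep hne
  exact fun γ hγ => ⟨i, (ncard_le_one (G.finite_sep c c')).mp h _ hi _ hγ⟩

variable {G}

/-- When `K^b = K^{b'}` but `b ≠ b'`, minimal galleries have length `2` and their middle
chamber is adjacent to `K^b`. -/
theorem OnMinimalGallery.sep_subset {b b' c : A} (hc : G.OnMinimalGallery b b' c) :
    G.sep b c ⊆ G.sep b b' ∪ range (G.simpleRoot b) := by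
  obtain ⟨m, g, hg, hm, k, hk, rfl⟩ := hc
  have h1 := (hg.take hk).ncard_sep_le
  have h2 := (hg.drop hk).ncard_sep_le
  rcases (G.sep b b').eq_empty_or_nonempty with hempty | hne
  · have hm2 : m ≤ 2 := hm ▸ G.galleryDist_le_two hempty
    rcases eq_or_ne k m with rfl | hkm
    · simp [hg.2.1, hempty]
    · exact (G.sep_subset_range_simpleRoot (by omega)).trans subset_union_right
  · rw [G.galleryDist_eq_ncard_sep hne] at hm
    have hunion := eq_of_subset_of_ncard_le (G.sep_subset_union b (g k) b')
      ((ncard_union_le _ _).trans (by omega)) ((G.finite_sep _ _).union (G.finite_sep _ _))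
    exact (subset_union_left.trans hunion.symm.subset).trans subset_union_left

variable (G)

theorem finite_chamber_image_onMinimalGallery (b b' : A) :
    (G.chamber '' {c | G.OnMinimalGallery b b' c}).Finite := by
  refine (((G.finite_sep b b').union (finite_range (G.simpleRoot b))).finite_subsets.image
    fun T => {x | ∀ γ ∈ (G.posRoots b \ T) ∪ -T, 0 < γ x}).subset ?_
  rintro _ ⟨c, hc, rfl⟩
  exact ⟨G.sep b c, hc.sep_subset, by
    rw [chamber_eq_setOf_posRoots, G.posRoots_eq_sdiff_sep_union_neg b c]⟩

/-! ### Segments -/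

theorem pos_of_mem_segment {b b' : A} {γ : Module.Dual ℝ (Vr r)} (hb : γ ∈ G.posRoots b)
    (hb' : γ ∈ G.posRoots b') {x y z : Vr r} (hx : x ∈ G.chamber b) (hy : y ∈ G.chamber b')
    (hz : z ∈ segment ℝ x y) : 0 < γ z :=
  (convex_halfSpace_gt γ.isLinear 0).segment_subset (hb.2 x hx) (hb'.2 y hy) hz

theorem exists_mem_closure_chamber {c : A} {z : Vr r}
    (hfin : {γ ∈ G.posRoots c | γ z ≤ 0}.Finite) : ∃ e, z ∈ closure (G.chamber e) := by
  generalize hn : {γ ∈ G.posRoots c | γ z ≤ 0}.ncard = n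
  induction n using Nat.strong_induction_on generalizing c with
  | _ n ih =>
    by_cases hall : ∀ i, 0 ≤ G.simpleRoot c i z
    · exact ⟨c, (G.closure_chamber c).symm ▸ hall⟩
    obtain ⟨i, hi⟩ := not_forall.mp hall
    rw [not_le] at hi
    have hsub : {γ ∈ G.posRoots (G.ρ i c) | γ z ≤ 0} ⊆
        {γ ∈ G.posRoots c | γ z ≤ 0} \ {G.simpleRoot c i} := by
      rintro γ ⟨hγ, hγz⟩
      rw [posRoots_rho] at hγ
      rcases hγ with rfl | ⟨hγ, hne⟩
      · rw [LinearMap.neg_apply, neg_nonpos] at hγz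
        exact absurd hγz hi.not_ge
      · exact ⟨⟨hγ, hγz⟩, hne⟩
    have hmem : G.simpleRoot c i ∈ {γ ∈ G.posRoots c | γ z ≤ 0} :=
      ⟨G.simpleRoot_mem_posRoots c i, hi.le⟩
    exact ih _ (hn ▸ (ncard_le_ncard hsub hfin.sdiff).trans_lt
      (ncard_sdiff_singleton_lt_of_mem hmem hfin)) ((hfin.sdiff).subset hsub) rfl

theorem ncard_sep_add_of_mem_closure {b b' e : A} {x y z : Vr r} (hx : x ∈ G.chamber b)
    (hy : y ∈ G.chamber b') (hz : z ∈ segment ℝ x y) (he : z ∈ closure (G.chamber e)) :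
    (G.sep b e).ncard + (G.sep e b').ncard = (G.sep b b').ncard := by
  have h1 : G.sep b e ⊆ G.sep b b' := fun γ ⟨hb, he'⟩ => ⟨hb, fun hb' => by
    have := G.nonneg_of_mem_closure ((G.neg_mem_posRoots_iff e hb.1).mpr he') he
    rw [LinearMap.neg_apply, neg_nonneg] at this
    exact this.not_gt (G.pos_of_mem_segment hb hb' hx hy hz)⟩
  have h2 : G.sep e b' ⊆ G.sep b b' := fun γ ⟨he', hb'⟩ => ⟨by_contra fun hb => by
    have := G.pos_of_mem_segment ((G.neg_mem_posRoots_iff b he'.1).mpr hb)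
      ((G.neg_mem_posRoots_iff b' he'.1).mpr hb') hx hy hz
    rw [LinearMap.neg_apply, neg_pos] at this
    exact this.not_ge (G.nonneg_of_mem_closure he' he), hb'⟩
  have hdisj : Disjoint (G.sep b e) (G.sep e b') :=
    disjoint_left.mpr fun _ h h' => h.2 h'.1
  rw [← ncard_union_eq hdisj (G.finite_sep _ _) (G.finite_sep _ _),
    subset_antisymm (union_subset h1 h2) (G.sep_subset_union b e b')]

theorem exists_onMinimalGallery_mem_closure {b b' : A} {x y z : Vr r} (hx : x ∈ G.chamber b)
    (hy : y ∈ G.chamber b') (hz : z ∈ segment ℝ x y) :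
    ∃ c, G.OnMinimalGallery b b' c ∧ z ∈ closure (G.chamber c) := by
  have hsub : {γ ∈ G.posRoots b | γ z ≤ 0} ⊆ G.sep b b' := fun γ ⟨hb, hγz⟩ =>
    ⟨hb, fun hb' => hγz.not_gt (G.pos_of_mem_segment hb hb' hx hy hz)⟩
  obtain ⟨e, he⟩ := G.exists_mem_closure_chamber ((G.finite_sep b b').subset hsub)
  obtain ⟨c, hc, hce⟩ :=
    G.exists_onMinimalGallery_of_ncard_sep_add (G.ncard_sep_add_of_mem_closure hx hy hz he)
  exact ⟨c, hc, hce ▸ he⟩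

end CartanRealization

/-- in the geometric realization of a connected simply connected Cartan
graph `𝒞` with real root system, for `b, b' ∈ A`, `x ∈ K^b`, `y ∈ K^{b'}`: the closed
segment `[x,y]` is contained in the union of the closures of the chambers occurring in
minimal galleries from `K^b` to `K^{b'}`, and the set of such chambers is finite. -/
theorem statement_13 {r : ℕ} {A : Type*}
    (ρ : Fin r → A → A) (C : A → Matrix (Fin r) (Fin r) ℤ)
    (hCG : IsCartanGraph ρ C) (hconn : CGConnected ρ C) (hsc : CGSimplyConnected ρ C)
    (hRS : IsRootSystemOfType ρ C (realRootsAt ρ C))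
    (a : A) (bβ : Module.Basis (Fin r) ℝ (Module.Dual ℝ (Vr r)))
    (b b' : A) (u u' : (Fin r → ℤ) → (Fin r → ℤ))
    (hu : WeylHom ρ C b a u) (hu' : WeylHom ρ C b' a u')
    (x y : Vr r) (hx : x ∈ Kch bβ u) (hy : y ∈ Kch bβ u') :
    (segment ℝ x y ⊆ {z : Vr r | ∃ c : A,
      (∃ (m : ℕ) (g : ℕ → A), g 0 = b ∧ g m = b' ∧
        (∀ k < m, objAdj ρ C a bβ (g k) (g (k + 1))) ∧
        m = galleryDist ρ C a bβ b b' ∧ ∃ k ≤ m, g k = c) ∧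
      ∃ uc : (Fin r → ℤ) → (Fin r → ℤ), WeylHom ρ C c a uc ∧
        z ∈ closure (Kch bβ uc)}) ∧
    ({K : Set (Vr r) | ∃ c : A,
      (∃ (m : ℕ) (g : ℕ → A), g 0 = b ∧ g m = b' ∧
        (∀ k < m, objAdj ρ C a bβ (g k) (g (k + 1))) ∧
        m = galleryDist ρ C a bβ b b' ∧ ∃ k ≤ m, g k = c) ∧
      ∃ uc : (Fin r → ℤ) → (Fin r → ℤ), WeylHom ρ C c a uc ∧
        K = Kch bβ uc}).Finite := by
  let G : CartanRealization r A := ⟨ρ, C, a, bβ, hCG, hconn, hsc, hRS⟩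
  have hxb : x ∈ G.chamber b := by rw [G.chamber_eq_Kch hu]; exact hx
  have hyb : y ∈ G.chamber b' := by rw [G.chamber_eq_Kch hu']; exact hy
  refine ⟨fun z hz => ?_, (G.finite_chamber_image_onMinimalGallery b b').subset ?_⟩
  · obtain ⟨c, ⟨m, g, ⟨h0, hm, hadj⟩, hd, hk⟩, hzc⟩ :=
      G.exists_onMinimalGallery_mem_closure hxb hyb hz
    exact ⟨c, ⟨m, g, h0, hm, hadj, hd, hk⟩, G.toBase c, G.weylHom_toBase c, hzc⟩
  · rintro K ⟨c, ⟨m, g, h0, hm, hadj, hd, hk⟩, uc, huc, rfl⟩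
    exact ⟨c, ⟨m, g, ⟨h0, hm, hadj⟩, hd, hk⟩, G.chamber_eq_Kch huc⟩
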